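/- Let (Ω, S) be a {1,k}-valenced association scheme (every valency is 1 or k, k > 1), fix α ∈ Ω, and for r ∈ S and x, y ∈ S_k set r_{x,y} = r ∩ (αx × αy). Suppose x, y, z ∈ S_k with x ∼ z, z ∼ y, and x ∼ y, and suppose r ∈ x*z and s ∈ z*y are linked with respect to (x,y,z) with witness t (so rs ∩ x*y ⊇ {t} arising from a Desarguesian configuration). Then r_{x,z} ∘ s_{z,y} = t_{x,y} (equality of relations, where ∘ is relational composition). -/

import Mathlib

open Finset

abbrev BRel (Ω : Type*) := Finset (Ω × Ω)

variable {Ω : Type*} [Fintype Ω] [DecidableEq Ω]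

/-- The diagonal relation `1_Ω`. -/
def diagRel (Ω : Type*) [Fintype Ω] [DecidableEq Ω] : BRel Ω :=
  Finset.univ.filter (fun p => p.1 = p.2)

/-- The converse relation `r*`. -/
def convRel (r : BRel Ω) : BRel Ω := r.image Prod.swap

/-- Relational composition `a ∘ b`. -/
def compBRel (a b : BRel Ω) : BRel Ω :=
  Finset.univ.filter (fun p => ∃ γ, (p.1, γ) ∈ a ∧ (γ, p.2) ∈ b)

/-- An association scheme on a finite set `Ω`: a partition `S` of `Ω × Ω` into nonempty
basis relations, containing the diagonal, closed under converse, with well-defined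
intersection numbers `c r s t`. -/
structure AssocScheme (Ω : Type*) [Fintype Ω] [DecidableEq Ω] where
  S : Finset (BRel Ω)
  nonempty : ∀ s ∈ S, s.Nonempty
  partition : ∀ p : Ω × Ω, ∃! s, s ∈ S ∧ p ∈ s
  diag_mem : diagRel Ω ∈ S
  conv_mem : ∀ s ∈ S, convRel s ∈ S
  c : BRel Ω → BRel Ω → BRel Ω → ℕ
  c_spec : ∀ r ∈ S, ∀ s ∈ S, ∀ t ∈ S, ∀ p ∈ t,
    (Finset.univ.filter (fun γ => (p.1, γ) ∈ r ∧ (γ, p.2) ∈ s)).card = c r s t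

namespace AssocScheme

variable (X : AssocScheme Ω)

/-- The valency `n_s = c_{s,s*}^{1}`. -/
def n (s : BRel Ω) : ℕ := X.c s (convRel s) (diagRel Ω)

/-- The complex product `rs` of two basis relations: all `t ∈ S` with `c_{r,s}^t ≠ 0`. -/
def cp (r s : BRel Ω) : Finset (BRel Ω) := X.S.filter (fun t => X.c r s t ≠ 0)

/-- The complex product of two sets of basis relations. -/
def cpS (A B : Finset (BRel Ω)) : Finset (BRel Ω) :=
  A.biUnion fun a => B.biUnion fun b => X.cp a b

/-- `S_k`: the basis relations of valency `k`. -/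
def Sk (k : ℕ) : Finset (BRel Ω) := X.S.filter (fun s => X.n s = k)

/-- `x ∼ y`: every `s` in the complex product `x*y` satisfies `c_{x,s}^y = 1`. -/
def adj (x y : BRel Ω) : Prop := ∀ s ∈ X.cp (convRel x) y, X.c x s y = 1

/-- `r(α,β)`: the unique basis relation containing `(α,β)`. -/
noncomputable def rel (α β : Ω) : BRel Ω := (X.partition (α, β)).choose

/-- The indistinguishing number `c(s) = Σ_t c_{t,t*}^s`. -/
def ind (s : BRel Ω) : ℕ := ∑ t ∈ X.S, X.c t (convRel t) s

/-- `k`-saturated: every at most four element subset of `S_k` has a common neighbor. -/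
def kSaturated (k : ℕ) : Prop :=
  ∀ T ⊆ X.Sk k, T.card ≤ 4 → ∃ y ∈ X.Sk k, ∀ x ∈ T, X.adj y x

/-- `r ∈ x*z` and `s ∈ z*y` are linked with respect to `(x,y,z)`, with witness `t`. -/
def linked (k : ℕ) (x y z r s t : BRel Ω) : Prop :=
  ∃ q ∈ X.Sk k, X.adj q x ∧ X.adj q y ∧ X.adj q z ∧
    ∃ u ∈ X.cp (convRel x) q, ∃ v ∈ X.cp (convRel y) q, ∃ w ∈ X.cp (convRel z) q,
      t ∈ X.cp r s ∧
      X.cp (convRel x) z ∩ X.cp u (convRel w) = {r} ∧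
      X.cp (convRel z) y ∩ X.cp w (convRel v) = {s} ∧
      X.cp (convRel x) y ∩ X.cp u (convRel v) = {t}

/-- Desarguesian with respect to `S_k`. -/
def Desarguesian (k : ℕ) : Prop :=
  ∀ x ∈ X.Sk k, ∀ y ∈ X.Sk k, ∀ z ∈ X.Sk k, X.adj x z → X.adj z y →
    ∀ r ∈ X.cp (convRel x) z, ∀ s ∈ X.cp (convRel z) y, ∃ t, X.linked k x y z r s t

end AssocScheme

/-- `αr = {β : (α,β) ∈ r}`. -/
def relImage (r : BRel Ω) (α : Ω) : Finset Ω := (r.filter (fun p => p.1 = α)).image Prod.snd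

/-- The restriction `r_{x,y} = r ∩ (αx × αy)`. -/
def restrictRel (α : Ω) (r x y : BRel Ω) : BRel Ω :=
  r.filter (fun p => p.1 ∈ relImage x α ∧ p.2 ∈ relImage y α)


/-- An algebraic isomorphism: a bijection between the sets of basis relations
preserving all intersection numbers. -/
def AlgIso {Ω Ω' : Type*} [Fintype Ω] [DecidableEq Ω] [Fintype Ω'] [DecidableEq Ω']
    (X : AssocScheme Ω) (X' : AssocScheme Ω') (φ : BRel Ω → BRel Ω') : Prop :=
  Set.BijOn φ ↑X.S ↑X'.S ∧
    ∀ r ∈ X.S, ∀ s ∈ X.S, ∀ t ∈ X.S, X.c r s t = X'.c (φ r) (φ s) (φ t)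

/-- A `φ`-faithful map with domain `D`. -/
def Faithful {Ω Ω' : Type*} [Fintype Ω] [DecidableEq Ω] [Fintype Ω'] [DecidableEq Ω']
    (X : AssocScheme Ω) (X' : AssocScheme Ω') (φ : BRel Ω → BRel Ω')
    (D : Finset Ω) (f : Ω → Ω') : Prop :=
  Set.InjOn f ↑D ∧ ∀ a ∈ D, ∀ b ∈ D, φ (X.rel a b) = X'.rel (f a) (f b)

/-- `f` is `φ`-extendable to the point `γ`. -/
def ExtendableAt {Ω Ω' : Type*} [Fintype Ω] [DecidableEq Ω] [Fintype Ω'] [DecidableEq Ω']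
    (X : AssocScheme Ω) (X' : AssocScheme Ω') (φ : BRel Ω → BRel Ω')
    (D : Finset Ω) (f : Ω → Ω') (γ : Ω) : Prop :=
  ∃ g : Ω → Ω', (∀ a ∈ D, g a = f a) ∧ Faithful X X' φ (insert γ D) g

/-!
If `a ∼ b` have the same valency and `m ∈ a*b`, then `m_{a,b}` is a perfect matching of `αa`
with `αb`: `c_{a,m}^b = 1` says every point of `αb` has one partner, and double counting then
gives one partner to every point of `αa`. In the linked configuration, take `β ∈ αx`, its
`u`-partner `ε ∈ αq`, and the `w`- and `v`-partners `γ ∈ αz`, `δ ∈ αy` of `ε`. The pairs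
`(β, γ)`, `(γ, δ)`, `(β, δ)` lie in `x*z ∩ uw*`, `z*y ∩ wv*`, `x*y ∩ uv*`, hence in `r`, `s`, `t`.
As `r`, `s`, `t` restrict to matchings, these triangles pin down `r_{x,z} ∘ s_{z,y} = t_{x,y}`.
-/

lemma mem_convRel {Ω : Type*} [DecidableEq Ω] {r : BRel Ω} {a b : Ω} :
    (a, b) ∈ convRel r ↔ (b, a) ∈ r := by
  simp [convRel, Prod.swap, and_comm]

lemma convRel_convRel {Ω : Type*} [DecidableEq Ω] (r : BRel Ω) : convRel (convRel r) = r := by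
  ext ⟨a, b⟩
  simp [mem_convRel]

lemma mem_compBRel {a b : BRel Ω} {p q : Ω} :
    (p, q) ∈ compBRel a b ↔ ∃ γ, (p, γ) ∈ a ∧ (γ, q) ∈ b := by
  simp [compBRel]

lemma mem_relImage {Ω : Type*} [DecidableEq Ω] {r : BRel Ω} {α β : Ω} :
    β ∈ relImage r α ↔ (α, β) ∈ r := by
  simp [relImage]

lemma mem_restrictRel {Ω : Type*} [DecidableEq Ω] {α : Ω} {r x y : BRel Ω} {p q : Ω} :
    (p, q) ∈ restrictRel α r x y ↔ (p, q) ∈ r ∧ (α, p) ∈ x ∧ (α, q) ∈ y := by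
  simp [restrictRel, mem_relImage]

lemma compBRel_restrictRel_eq_of_rightUnique {α : Ω} {x y z r s t : BRel Ω}
    (hr : Relator.RightUnique fun p q => (p, q) ∈ restrictRel α r x z)
    (hs : Relator.RightUnique fun p q => (p, q) ∈ restrictRel α s z y)
    (ht : Relator.RightUnique fun p q => (p, q) ∈ restrictRel α t x y)
    (htri : ∀ β, (α, β) ∈ x → ∃ γ δ, (β, γ) ∈ restrictRel α r x z ∧
      (γ, δ) ∈ restrictRel α s z y ∧ (β, δ) ∈ restrictRel α t x y) :
    compBRel (restrictRel α r x z) (restrictRel α s z y) = restrictRel α t x y := by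
  ext ⟨β, δ⟩
  rw [mem_compBRel]
  constructor
  · rintro ⟨γ, hβγ, hγδ⟩
    obtain ⟨γ₀, δ₀, hβγ₀, hγ₀δ₀, hβδ₀⟩ := htri β (mem_restrictRel.mp hβγ).2.1
    obtain rfl := hr hβγ hβγ₀
    obtain rfl := hs hγδ hγ₀δ₀
    exact hβδ₀
  · intro hβδ
    obtain ⟨γ₀, δ₀, hβγ₀, hγ₀δ₀, hβδ₀⟩ := htri β (mem_restrictRel.mp hβδ).2.1
    obtain rfl := ht hβδ hβδ₀
    exact ⟨γ₀, hβγ₀, hγ₀δ₀⟩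

namespace AssocScheme

variable (X : AssocScheme Ω)

lemma card_relImage {a : BRel Ω} (ha : a ∈ X.S) (α : Ω) : #(relImage a α) = X.n a := by
  rw [n, ← X.c_spec a ha (convRel a) (X.conv_mem a ha) (diagRel Ω) X.diag_mem (α, α)
    (by simp [diagRel])]
  congr 1
  ext γ
  simp [mem_relImage, mem_convRel]

lemma n_pos {a : BRel Ω} (ha : a ∈ X.S) : 0 < X.n a := by
  obtain ⟨⟨α, β⟩, hαβ⟩ := X.nonempty a ha
  rw [← X.card_relImage ha α]
  exact card_pos.mpr ⟨β, mem_relImage.mpr hαβ⟩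

lemma c_convRel {r s t : BRel Ω} (hr : r ∈ X.S) (hs : s ∈ X.S) (ht : t ∈ X.S) :
    X.c (convRel s) (convRel r) (convRel t) = X.c r s t := by
  obtain ⟨⟨a, b⟩, hab⟩ := X.nonempty t ht
  rw [← X.c_spec r hr s hs t ht _ hab, ← X.c_spec (convRel s) (X.conv_mem s hs) (convRel r)
    (X.conv_mem r hr) (convRel t) (X.conv_mem t ht) (b, a) (mem_convRel.mpr hab)]
  congr 1
  ext γ
  simp [mem_convRel, and_comm]

lemma convRel_mem_cp_convRel {a b m : BRel Ω} (ha : a ∈ X.S) (hb : b ∈ X.S)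
    (hm : m ∈ X.cp (convRel a) b) : convRel m ∈ X.cp (convRel b) a := by
  obtain ⟨hmS, hc⟩ := mem_filter.mp hm
  refine mem_filter.mpr ⟨X.conv_mem m hmS, ?_⟩
  rwa [← X.c_convRel (X.conv_mem a ha) hb hmS, convRel_convRel] at hc

lemma mem_cp_of_mem_compBRel {a b m : BRel Ω} (ha : a ∈ X.S) (hb : b ∈ X.S) (hm : m ∈ X.S)
    {p : Ω × Ω} (hpm : p ∈ m) (hp : p ∈ compBRel a b) : m ∈ X.cp a b := by
  obtain ⟨γ, hγ⟩ := mem_compBRel.mp hp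
  refine mem_filter.mpr ⟨hm, ?_⟩
  rw [← X.c_spec a ha b hb m hm p hpm]
  exact (card_pos.mpr ⟨γ, by simpa using hγ⟩).ne'

lemma mem_of_mem_compBRel_of_cp_inter_eq_singleton {a b c d r : BRel Ω} (ha : a ∈ X.S)
    (hb : b ∈ X.S) (hc : c ∈ X.S) (hd : d ∈ X.S) (h : X.cp a b ∩ X.cp c d = {r})
    {p : Ω × Ω} (hab : p ∈ compBRel a b) (hcd : p ∈ compBRel c d) : p ∈ r := by
  obtain ⟨m, ⟨hm, hpm⟩, -⟩ := X.partition p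
  have : m ∈ X.cp a b ∩ X.cp c d :=
    mem_inter.mpr ⟨X.mem_cp_of_mem_compBRel ha hb hm hpm hab,
      X.mem_cp_of_mem_compBRel hc hd hm hpm hcd⟩
  rw [h, mem_singleton] at this
  rwa [this] at hpm

lemma existsUnique_left_of_adj {a b m : BRel Ω} (ha : a ∈ X.S) (hb : b ∈ X.S)
    (hadj : X.adj a b) (hm : m ∈ X.cp (convRel a) b) {α γ : Ω} (hγ : (α, γ) ∈ b) :
    ∃! β, (α, β) ∈ a ∧ (β, γ) ∈ m :=
  (Fintype.existsUnique_iff_card_one _).mpr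
    ((X.c_spec a ha m (mem_filter.mp hm).1 b hb (α, γ) hγ).trans (hadj m hm))

/-- Double counting the pairs `(β, γ) ∈ m` with `β ∈ αa`, `γ ∈ αb`: each `γ` has exactly one
partner, so each `β` has `c_{b,m*}^a` partners, and `n_a c_{b,m*}^a = n_b = n_a`. -/
lemma c_convRel_eq_one_of_adj {k : ℕ} {a b m : BRel Ω} (ha : a ∈ X.Sk k) (hb : b ∈ X.Sk k)
    (hadj : X.adj a b) (hm : m ∈ X.cp (convRel a) b) : X.c b (convRel m) a = 1 := by
  obtain ⟨haS, hna⟩ := mem_filter.mp ha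
  obtain ⟨hbS, hnb⟩ := mem_filter.mp hb
  have hmS := (mem_filter.mp hm).1
  obtain ⟨⟨α, -⟩, -⟩ := X.nonempty a haS
  have hcount := card_mul_eq_card_mul (s := relImage a α) (t := relImage b α)
    (fun β γ => (β, γ) ∈ m) (m := X.c b (convRel m) a) (n := 1)
    (fun β hβ => by
      rw [← X.c_spec b hbS (convRel m) (X.conv_mem m hmS) a haS (α, β) (mem_relImage.mp hβ)]
      congr 1
      ext γ
      simp [bipartiteAbove, mem_relImage, mem_convRel])
    (fun γ hγ => by
      rw [← (X.c_spec a haS m hmS b hbS (α, γ) (mem_relImage.mp hγ)).trans (hadj m hm)]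
      congr 1
      ext β
      simp [bipartiteBelow, mem_relImage])
  rw [X.card_relImage haS, X.card_relImage hbS, hna, hnb, mul_one] at hcount
  exact Nat.eq_of_mul_eq_mul_left (hna ▸ X.n_pos haS) (hcount.trans (mul_one k).symm)

lemma existsUnique_right_of_adj {k : ℕ} {a b m : BRel Ω} (ha : a ∈ X.Sk k) (hb : b ∈ X.Sk k)
    (hadj : X.adj a b) (hm : m ∈ X.cp (convRel a) b) {α β : Ω} (hβ : (α, β) ∈ a) :
    ∃! γ, (α, γ) ∈ b ∧ (β, γ) ∈ m := by
  have hmS := (mem_filter.mp hm).1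
  rw [Fintype.existsUnique_iff_card_one, ← X.c_convRel_eq_one_of_adj ha hb hadj hm,
    ← X.c_spec b (mem_filter.mp hb).1 (convRel m) (X.conv_mem m hmS) a (mem_filter.mp ha).1
      (α, β) hβ]
  simp [mem_convRel]

lemma rightUnique_restrictRel {k : ℕ} {a b m : BRel Ω} (ha : a ∈ X.Sk k) (hb : b ∈ X.Sk k)
    (hadj : X.adj a b) (hm : m ∈ X.cp (convRel a) b) (α : Ω) :
    Relator.RightUnique fun p q => (p, q) ∈ restrictRel α m a b := by
  intro β γ γ' hγ hγ'
  rw [mem_restrictRel] at hγ hγ'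
  exact (X.existsUnique_right_of_adj ha hb hadj hm hγ.2.1).unique
    ⟨hγ.2.2, hγ.1⟩ ⟨hγ'.2.2, hγ'.1⟩

lemma mem_cp_of_linked {k : ℕ} {x y z r s t : BRel Ω} (h : X.linked k x y z r s t) :
    r ∈ X.cp (convRel x) z ∧ s ∈ X.cp (convRel z) y ∧ t ∈ X.cp (convRel x) y := by
  obtain ⟨_, _, _, _, _, _, _, _, _, _, _, _, hr, hs, ht⟩ := h
  exact ⟨(mem_inter.mp (hr ▸ mem_singleton_self r)).1,
    (mem_inter.mp (hs ▸ mem_singleton_self s)).1, (mem_inter.mp (ht ▸ mem_singleton_self t)).1⟩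

lemma exists_triangle_of_linked {k : ℕ} {x y z r s t : BRel Ω} (hx : x ∈ X.Sk k)
    (hy : y ∈ X.Sk k) (hz : z ∈ X.Sk k) (h : X.linked k x y z r s t) {α β : Ω}
    (hβ : (α, β) ∈ x) : ∃ γ δ, (β, γ) ∈ restrictRel α r x z ∧
      (γ, δ) ∈ restrictRel α s z y ∧ (β, δ) ∈ restrictRel α t x y := by
  obtain ⟨q, hq, hqx, hqy, hqz, u, hu, v, hv, w, hw, -, hr, hs, ht⟩ := h
  have hxS := (mem_filter.mp hx).1
  have hyS := (mem_filter.mp hy).1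
  have hzS := (mem_filter.mp hz).1
  have hqS := (mem_filter.mp hq).1
  have huS := (mem_filter.mp hu).1
  have hvS := (mem_filter.mp hv).1
  have hwS := (mem_filter.mp hw).1
  obtain ⟨ε, hε, hεβ⟩ := (X.existsUnique_left_of_adj hqS hxS hqx
    (X.convRel_mem_cp_convRel hxS hqS hu) hβ).exists
  obtain ⟨γ, hγ, hεγ⟩ := (X.existsUnique_right_of_adj hq hz hqz
    (X.convRel_mem_cp_convRel hzS hqS hw) hε).exists
  obtain ⟨δ, hδ, hεδ⟩ := (X.existsUnique_right_of_adj hq hy hqy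
    (X.convRel_mem_cp_convRel hyS hqS hv) hε).exists
  have hβγ : (β, γ) ∈ r := X.mem_of_mem_compBRel_of_cp_inter_eq_singleton
    (X.conv_mem x hxS) hzS huS (X.conv_mem w hwS) hr
    (mem_compBRel.mpr ⟨α, mem_convRel.mpr hβ, hγ⟩)
    (mem_compBRel.mpr ⟨ε, mem_convRel.mp hεβ, hεγ⟩)
  have hγδ : (γ, δ) ∈ s := X.mem_of_mem_compBRel_of_cp_inter_eq_singleton
    (X.conv_mem z hzS) hyS hwS (X.conv_mem v hvS) hs
    (mem_compBRel.mpr ⟨α, mem_convRel.mpr hγ, hδ⟩)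
    (mem_compBRel.mpr ⟨ε, mem_convRel.mp hεγ, hεδ⟩)
  have hβδ : (β, δ) ∈ t := X.mem_of_mem_compBRel_of_cp_inter_eq_singleton
    (X.conv_mem x hxS) hyS huS (X.conv_mem v hvS) ht
    (mem_compBRel.mpr ⟨α, mem_convRel.mpr hβ, hδ⟩)
    (mem_compBRel.mpr ⟨ε, mem_convRel.mp hεβ, hεδ⟩)
  exact ⟨γ, δ, mem_restrictRel.mpr ⟨hβγ, hβ, hγ⟩, mem_restrictRel.mpr ⟨hγδ, hγ, hδ⟩,
    mem_restrictRel.mpr ⟨hβδ, hβ, hδ⟩⟩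

end AssocScheme

theorem linked_restriction_eq_general (X : AssocScheme Ω) (k : ℕ) (α : Ω)
    (x : BRel Ω) (hx : x ∈ X.Sk k) (y : BRel Ω) (hy : y ∈ X.Sk k) (z : BRel Ω) (hz : z ∈ X.Sk k)
    (hxz : X.adj x z) (hzy : X.adj z y) (hxy : X.adj x y)
    (r : BRel Ω) (s : BRel Ω)
    (t : BRel Ω) (hlinked : X.linked k x y z r s t) :
    compBRel (restrictRel α r x z) (restrictRel α s z y) = restrictRel α t x y := by
  obtain ⟨hr, hs, ht⟩ := X.mem_cp_of_linked hlinked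
  exact compBRel_restrictRel_eq_of_rightUnique (X.rightUnique_restrictRel hx hz hxz hr α)
    (X.rightUnique_restrictRel hz hy hzy hs α) (X.rightUnique_restrictRel hx hy hxy ht α)
    fun β hβ => X.exists_triangle_of_linked hx hy hz hlinked hβ

theorem linked_restriction_eq (X : AssocScheme Ω) (k : ℕ) (hk : 1 < k)
    (hval : ∀ s ∈ X.S, X.n s = 1 ∨ X.n s = k) (α : Ω)
    (x : BRel Ω) (hx : x ∈ X.Sk k) (y : BRel Ω) (hy : y ∈ X.Sk k) (z : BRel Ω) (hz : z ∈ X.Sk k)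
    (hxz : X.adj x z) (hzy : X.adj z y) (hxy : X.adj x y)
    (r : BRel Ω) (hr : r ∈ X.cp (convRel x) z) (s : BRel Ω) (hs : s ∈ X.cp (convRel z) y)
    (t : BRel Ω) (hlinked : X.linked k x y z r s t) :
    compBRel (restrictRel α r x z) (restrictRel α s z y) = restrictRel α t x y :=
  linked_restriction_eq_general X k α x hx y hy z hz hxz hzy hxy r s t hlinked
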